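/- Fix F, G ∈ ℝⁿ, scalars Q ≥ 0 and R > 0, and a nonzero vector p ∈ ℝⁿ such that p·F − (p·G)²/R < 0. For nonzero w ∈ ℝⁿ set f_n(w) = (w/‖w‖)·F, g_n(w) = (w/‖w‖)·G, and define z(w) = −Q/f_n(w) if g_n(w) = 0, and z(w) = R(f_n(w) + √(f_n(w)² + 2(Q/R) g_n(w)²))/g_n(w)² if g_n(w) ≠ 0. Then z(p) is well defined, and there exist an open neighborhood U of p in ℝⁿ∖{0} and a continuously differentiable function ζ : U → ℝ such that ζ(p) = z(p) and, for every w ∈ U, −(g_n(w)²/(2R)) ζ(w)² + f_n(w) ζ(w) + Q = 0. -/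

import Mathlib

open scoped BigOperators RealInnerProductSpace

/-- The root `z(w)` of the scalar HJB quadratic with constant data `F, G, Q, R`:
`0 = −(g_n²/(2R))z² + f_n z + Q`, `f_n = (w/‖w‖)·F`, `g_n = (w/‖w‖)·G`. -/
noncomputable def zConst (n : ℕ) (F G : EuclideanSpace ℝ (Fin n)) (Q R : ℝ)
    (w : EuclideanSpace ℝ (Fin n)) : ℝ :=
  if ⟪w, G⟫ = 0 then -Q / (⟪w, F⟫ / ‖w‖)
  else R * (⟪w, F⟫ / ‖w‖ +
      Real.sqrt ((⟪w, F⟫ / ‖w‖) ^ 2 + 2 * (Q / R) * (⟪w, G⟫ / ‖w‖) ^ 2)) /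
    (⟪w, G⟫ / ‖w‖) ^ 2

private lemma aux_cd {n : ℕ} (F : EuclideanSpace ℝ (Fin n))
    {w : EuclideanSpace ℝ (Fin n)} (hw : w ≠ 0) :
    ContDiffAt ℝ 1 (fun v : EuclideanSpace ℝ (Fin n) => ⟪v, F⟫ / ‖v‖) w :=
  (contDiffAt_id.inner ℝ contDiffAt_const).div (contDiffAt_id.norm ℝ hw)
    (norm_ne_zero_iff.mpr hw)

private lemma quadA {R a b : ℝ} (hb : b ≠ 0) (hR : R ≠ 0) :
    -(b ^ 2 / (2 * R)) * (2 * R * a / b ^ 2) ^ 2 + a * (2 * R * a / b ^ 2) + 0 = 0 := by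
  field_simp
  ring

private lemma auxQR {Q R a b : ℝ} (hR : R ≠ 0) :
    (a ^ 2 + 2 * (Q / R) * b ^ 2) * R = a ^ 2 * R + 2 * Q * b ^ 2 := by
  field_simp

private lemma quadC {Q R a b s : ℝ} (hR : R ≠ 0) (hD : s - a ≠ 0)
    (hs2 : s ^ 2 * R = a ^ 2 * R + 2 * Q * b ^ 2) :
    -(b ^ 2 / (2 * R)) * (2 * Q / (s - a)) ^ 2 + a * (2 * Q / (s - a)) + Q = 0 := by
  field_simp
  linear_combination Q * hs2

/-- Under the strict Lyapunov condition `p·F − (p·G)²/R < 0`, the root `z` of the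
scalar HJB quadratic is well defined at `p` and extends to a continuously
differentiable solution `ζ` of the quadratic on a neighborhood of `p` in `ℝⁿ∖{0}`. -/
theorem z_locally_C1 (n : ℕ) (F G : EuclideanSpace ℝ (Fin n)) (Q R : ℝ)
    (hQ : 0 ≤ Q) (hR : 0 < R)
    (p : EuclideanSpace ℝ (Fin n)) (hp : p ≠ 0)
    (hLyap : ⟪p, F⟫ - ⟪p, G⟫ ^ 2 / R < 0) :
    (⟪p, G⟫ = 0 → ⟪p, F⟫ ≠ 0) ∧
    ∃ U : Set (EuclideanSpace ℝ (Fin n)), IsOpen U ∧ p ∈ U ∧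
      (∀ w ∈ U, w ≠ 0) ∧
      ∃ ζ : EuclideanSpace ℝ (Fin n) → ℝ, ContDiffOn ℝ 1 ζ U ∧
        ζ p = zConst n F G Q R p ∧
        ∀ w ∈ U,
          -((⟪w, G⟫ / ‖w‖) ^ 2 / (2 * R)) * ζ w ^ 2 + (⟪w, F⟫ / ‖w‖) * ζ w + Q = 0 := by
  have hRne : R ≠ 0 := ne_of_gt hR
  have hpn : (0 : ℝ) < ‖p‖ := norm_pos_iff.mpr hp
  have hfirst : ⟪p, G⟫ = 0 → ⟪p, F⟫ ≠ 0 := by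
    intro h0
    rw [h0] at hLyap
    intro hF0
    rw [hF0] at hLyap
    simp at hLyap
  refine ⟨hfirst, ?_⟩
  by_cases hQ0 : Q = 0
  · subst hQ0
    by_cases hA : ⟪p, G⟫ ≠ 0 ∧ 0 < ⟪p, F⟫
    · -- ζ w = 2R f / g²  on U = {w ≠ 0, ⟪w,G⟫ ≠ 0}
      refine ⟨{0}ᶜ ∩ (fun w : EuclideanSpace ℝ (Fin n) => ⟪w, G⟫) ⁻¹' {0}ᶜ, ?_, ?_, ?_, ?_⟩
      · exact isOpen_compl_singleton.inter
          (isOpen_compl_singleton.preimage ((contDiff_id.inner ℝ contDiff_const : ContDiff ℝ 1 _)).continuous)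
      · exact ⟨hp, hA.1⟩
      · exact fun w hw => hw.1
      · refine ⟨fun w => 2 * R * (⟪w, F⟫ / ‖w‖) / ((⟪w, G⟫ / ‖w‖) ^ 2), ?_, ?_, ?_⟩
        · intro w hw
          have hwn : w ≠ 0 := hw.1
          have hg : (⟪w, G⟫ : ℝ) / ‖w‖ ≠ 0 :=
            div_ne_zero hw.2 (norm_ne_zero_iff.mpr hwn)
          exact ((contDiffAt_const.mul (aux_cd F hwn)).div ((aux_cd G hwn).pow 2)
            (pow_ne_zero 2 hg)).contDiffWithinAt
        · rw [zConst, if_neg hA.1]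
          have hf0 : (0 : ℝ) ≤ ⟪p, F⟫ / ‖p‖ := le_of_lt (div_pos hA.2 hpn)
          rw [show (⟪p, F⟫ / ‖p‖) ^ 2 + 2 * ((0:ℝ) / R) * (⟪p, G⟫ / ‖p‖) ^ 2
              = (⟪p, F⟫ / ‖p‖) ^ 2 by ring, Real.sqrt_sq hf0]
          ring
        · intro w hw
          have hg : (⟪w, G⟫ : ℝ) / ‖w‖ ≠ 0 :=
            div_ne_zero hw.2 (norm_ne_zero_iff.mpr hw.1)
          exact quadA (a := (⟪w, F⟫ : ℝ) / ‖w‖) hg hRne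
    · -- ζ ≡ 0 on {0}ᶜ
      refine ⟨{0}ᶜ, isOpen_compl_singleton, hp, fun w hw => hw,
        fun _ => 0, contDiffOn_const, ?_, ?_⟩
      · rw [zConst]
        by_cases hg : ⟪p, G⟫ = 0
        · rw [if_pos hg]; simp
        · rw [if_neg hg]
          have hfle : ⟪p, F⟫ ≤ 0 := by
            by_contra h
            exact hA ⟨hg, lt_of_not_ge h⟩
          have hf0 : ⟪p, F⟫ / ‖p‖ ≤ 0 := div_nonpos_of_nonpos_of_nonneg hfle (norm_nonneg p)
          rw [show (⟪p, F⟫ / ‖p‖) ^ 2 + 2 * ((0:ℝ) / R) * (⟪p, G⟫ / ‖p‖) ^ 2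
              = (-(⟪p, F⟫ / ‖p‖)) ^ 2 by ring, Real.sqrt_sq (by linarith)]
          simp
      · intro w hw
        simp
  · -- main case: Q > 0, ζ w = 2Q / (√(f² + 2(Q/R)g²) − f)
    have hQpos : 0 < Q := lt_of_le_of_ne hQ (Ne.symm hQ0)
    set A : EuclideanSpace ℝ (Fin n) → ℝ :=
      fun w => (⟪w, F⟫ / ‖w‖) ^ 2 + 2 * (Q / R) * (⟪w, G⟫ / ‖w‖) ^ 2 with hAdef
    set D : EuclideanSpace ℝ (Fin n) → ℝ :=
      fun w => Real.sqrt (A w) - ⟪w, F⟫ / ‖w‖ with hDdef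
    have hAcont : ContinuousOn A {0}ᶜ := fun w hw =>
      (((aux_cd F hw).pow 2).add (contDiffAt_const.mul
        ((aux_cd G hw).pow 2))).continuousAt.continuousWithinAt
    have hDcont : ContinuousOn D {0}ᶜ :=
      (Real.continuous_sqrt.comp_continuousOn hAcont).sub (fun w hw =>
        (aux_cd F hw).continuousAt.continuousWithinAt)
    have hAp : 0 < A p := by
      rcases eq_or_ne ⟪p, G⟫ 0 with hg | hg
      · have hfneg : ⟪p, F⟫ < 0 := by
          rw [hg] at hLyap; simpa using hLyap
        have hfp : ⟪p, F⟫ / ‖p‖ ≠ 0 := div_ne_zero (ne_of_lt hfneg) (ne_of_gt hpn)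
        have h1 : 0 < (⟪p, F⟫ / ‖p‖) ^ 2 :=
          lt_of_le_of_ne (sq_nonneg _) (Ne.symm (pow_ne_zero 2 hfp))
        have h2 : 0 ≤ 2 * (Q / R) * (⟪p, G⟫ / ‖p‖) ^ 2 := by positivity
        simp only [hAdef]; linarith
      · have hgp : (⟪p, G⟫ : ℝ) / ‖p‖ ≠ 0 := div_ne_zero hg (ne_of_gt hpn)
        have h2 : 0 < 2 * (Q / R) * (⟪p, G⟫ / ‖p‖) ^ 2 :=
          mul_pos (by positivity)
            (lt_of_le_of_ne (sq_nonneg _) (Ne.symm (pow_ne_zero 2 hgp)))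
        have h1 : 0 ≤ (⟪p, F⟫ / ‖p‖) ^ 2 := sq_nonneg _
        simp only [hAdef]; linarith
    have hDp : 0 < D p := by
      rcases le_or_gt (⟪p, F⟫ / ‖p‖) 0 with hf | hf
      · have := Real.sqrt_pos.mpr hAp
        simp only [hDdef]; linarith
      · have hfF : 0 < ⟪p, F⟫ := by
          rcases div_pos_iff.mp hf with ⟨h, _⟩ | ⟨_, h⟩
          · exact h
          · exact absurd h (not_lt.mpr (norm_nonneg p))
        have hg : ⟪p, G⟫ ≠ 0 := by
          intro hg0
          rw [hg0] at hLyap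
          rw [show ((0:ℝ) ^ 2 / R) = 0 from by simp] at hLyap
          linarith
        have hgp : (⟪p, G⟫ : ℝ) / ‖p‖ ≠ 0 := div_ne_zero hg (ne_of_gt hpn)
        have h2 : 0 < 2 * (Q / R) * (⟪p, G⟫ / ‖p‖) ^ 2 :=
          mul_pos (by positivity)
            (lt_of_le_of_ne (sq_nonneg _) (Ne.symm (pow_ne_zero 2 hgp)))
        have hlt : (⟪p, F⟫ / ‖p‖) ^ 2 < A p := by simp only [hAdef]; linarith
        have := Real.sqrt_lt_sqrt (sq_nonneg _) hlt
        rw [Real.sqrt_sq hf.le] at this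
        simp only [hDdef]; linarith
    set U : Set (EuclideanSpace ℝ (Fin n)) :=
      ({0}ᶜ ∩ A ⁻¹' Set.Ioi 0) ∩ ({0}ᶜ ∩ D ⁻¹' Set.Ioi 0) with hUdef
    have hUopen : IsOpen U :=
      (hAcont.isOpen_inter_preimage isOpen_compl_singleton isOpen_Ioi).inter
        (hDcont.isOpen_inter_preimage isOpen_compl_singleton isOpen_Ioi)
    have hpU : p ∈ U := ⟨⟨hp, hAp⟩, ⟨hp, hDp⟩⟩
    have hUne : ∀ w ∈ U, w ≠ 0 := fun w hw => hw.1.1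
    refine ⟨U, hUopen, hpU, hUne, fun w => 2 * Q / D w, ?_, ?_, ?_⟩
    · intro w hw
      have hwn : w ≠ 0 := hw.1.1
      have hAw : 0 < A w := hw.1.2
      have hDw : 0 < D w := hw.2.2
      have hAcd : ContDiffAt ℝ 1 A w :=
        ((aux_cd F hwn).pow 2).add (contDiffAt_const.mul ((aux_cd G hwn).pow 2))
      have hDcd : ContDiffAt ℝ 1 D w := (hAcd.sqrt (ne_of_gt hAw)).sub (aux_cd F hwn)
      exact (contDiffAt_const.div hDcd (ne_of_gt hDw)).contDiffWithinAt
    · rw [zConst]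
      by_cases hg : ⟪p, G⟫ = 0
      · rw [if_pos hg]
        have hfneg : ⟪p, F⟫ < 0 := by
          rw [hg] at hLyap; simpa using hLyap
        show 2 * Q / D p = _
        set fv := (⟪p, F⟫ : ℝ) / ‖p‖ with hfv
        have hfp : fv < 0 := div_neg_of_neg_of_pos hfneg hpn
        have hDp_eq : D p = -(2 * fv) := by
          have hA_eq : A p = (-fv) ^ 2 := by
            show fv ^ 2 + 2 * (Q / R) * (⟪p, G⟫ / ‖p‖) ^ 2 = (-fv) ^ 2
            rw [hg]; ring
          show Real.sqrt (A p) - fv = -(2 * fv)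
          rw [hA_eq, Real.sqrt_sq (by linarith)]; ring
        rw [hDp_eq, div_eq_div_iff (by intro h; nlinarith) (ne_of_lt hfp)]
        ring
      · rw [if_neg hg]
        show 2 * Q / D p = _
        set fv := (⟪p, F⟫ : ℝ) / ‖p‖ with hfv
        set gv := (⟪p, G⟫ : ℝ) / ‖p‖ with hgv
        set s := Real.sqrt (A p) with hsdef
        have hgp : gv ≠ 0 := div_ne_zero hg (ne_of_gt hpn)
        have hs2' : s ^ 2 * R = fv ^ 2 * R + 2 * Q * gv ^ 2 := by
          rw [hsdef, Real.sq_sqrt hAp.le,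
            show A p = fv ^ 2 + 2 * (Q / R) * gv ^ 2 from rfl]
          field_simp
        rw [div_eq_div_iff (ne_of_gt hDp) (pow_ne_zero 2 hgp),
          show D p = s - fv from rfl]
        linear_combination (-1 : ℝ) * hs2'
    · intro w hw
      have hAw : 0 < A w := hw.1.2
      have hDw : 0 < D w := hw.2.2
      have hs2 : Real.sqrt (A w) ^ 2 * R
          = (⟪w, F⟫ / ‖w‖) ^ 2 * R + 2 * Q * (⟪w, G⟫ / ‖w‖) ^ 2 := by
        rw [Real.sq_sqrt hAw.le]
        exact auxQR hRne
      have hD : Real.sqrt (A w) - ⟪w, F⟫ / ‖w‖ ≠ 0 := ne_of_gt hDw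
      exact quadC hRne hD hs2
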